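/- arXiv:math/0008243 — 2 statements merged into one kernel-verified Lean document; each statement's English description precedes it below -/
import Mathlib

section
/- Fix δ > 0. There exist constants C(δ) > 0 and ε₀(δ) > 0 such that for all ε with 0 < ε < ε₀(δ) and all integers ℓ, m, n with n ≥ 1 and |ℓ| + |m| ≤ (1−δ)n, the following hold: (i) every k ∈ S_ε satisfies k ≤ (1 − (2−√2)δ + C(δ)·ε)·n; (ii) every k ∈ S_ε satisfies (n−k)² − 2ℓ² − 2(m−k)² ≥ ε·(n−k)², and consequently 1/√((n−k)² − 2ℓ² − 2(m−k)²) ≤ C(δ)/(√ε · n). -/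
/-- The set `S_ε = {k ∈ ℤ : k ≥ 0 and ℓ² + (m-k)² ≤ (1-ε)(n-k)²/2}`. -/
def Sset (ℓ m : ℤ) (n : ℕ) (ε : ℝ) : Set ℤ :=
  {k | 0 ≤ k ∧ (ℓ : ℝ) ^ 2 + ((m : ℝ) - (k : ℝ)) ^ 2 ≤ (1 - ε) * ((n : ℝ) - (k : ℝ)) ^ 2 / 2}

set_option maxHeartbeats 1000000 in
/-- Lemma 5: bounds on the elements of `S_ε`. -/
theorem statement4 (δ : ℝ) (hδ : 0 < δ) :
    ∃ C : ℝ, 0 < C ∧ ∃ ε₀ : ℝ, 0 < ε₀ ∧ ∀ ε : ℝ, 0 < ε → ε < ε₀ →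
      ∀ (ℓ m : ℤ) (n : ℕ), 1 ≤ n → (|ℓ| : ℝ) + (|m| : ℝ) ≤ (1 - δ) * (n : ℝ) →
        ∀ k ∈ Sset ℓ m n ε,
          ((k : ℝ) ≤ (1 - (2 - Real.sqrt 2) * δ + C * ε) * (n : ℝ)) ∧
          ε * ((n : ℝ) - (k : ℝ)) ^ 2 ≤
              ((n : ℝ) - (k : ℝ)) ^ 2 - 2 * (ℓ : ℝ) ^ 2 - 2 * ((m : ℝ) - (k : ℝ)) ^ 2 ∧
          1 / Real.sqrt (((n : ℝ) - (k : ℝ)) ^ 2 - 2 * (ℓ : ℝ) ^ 2 - 2 * ((m : ℝ) - (k : ℝ)) ^ 2) ≤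
              C / (Real.sqrt ε * (n : ℝ)) := by
  have hs0 : (0:ℝ) ≤ Real.sqrt 2 := Real.sqrt_nonneg 2
  have hs2 : Real.sqrt 2 ^ 2 = 2 := Real.sq_sqrt (by norm_num)
  have hs1 : (1:ℝ) ≤ Real.sqrt 2 := by nlinarith
  have hslt : Real.sqrt 2 < 2 := by nlinarith
  set s := Real.sqrt 2 with hs
  have hc0 : 0 < (2 - s) * δ := mul_pos (by linarith) hδ
  refine ⟨1 / ((2 - s) * δ) + 1, by positivity, 1, one_pos, ?_⟩
  intro ε hε hε1 ℓ m n hn hlm k hk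
  obtain ⟨hk0, hkineq⟩ := hk
  have hN : (1:ℝ) ≤ (n:ℝ) := by exact_mod_cast hn
  have hK0 : (0:ℝ) ≤ (k:ℝ) := by exact_mod_cast hk0
  push_cast at hlm
  have hM : |(m:ℝ)| ≤ (1-δ) * n := by
    have := abs_nonneg (ℓ:ℝ); linarith
  have hm' : (m:ℝ) ≤ (1-δ) * n := (abs_le.1 hM).2
  have hMk : ((m:ℝ) - k)^2 ≤ ((n:ℝ) - k)^2 / 2 := by nlinarith [sq_nonneg (ℓ:ℝ), sq_nonneg ((n:ℝ)-k), hε.le]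
  have hKN : (k:ℝ) < n := by
    by_contra h
    push_neg at h
    have h1 : ((k:ℝ) - n) + δ * n ≤ (k:ℝ) - m := by nlinarith
    have h2 : (0:ℝ) ≤ (k:ℝ) - n := by linarith
    nlinarith [mul_pos hδ (by linarith : (0:ℝ) < (n:ℝ))]
  have hb : (0:ℝ) ≤ (n:ℝ) - k := by linarith
  have hmain : (k:ℝ) ≤ (1 - (2 - s)*δ) * n := by
    rcases le_or_gt (k:ℝ) ((1-δ)*n) with h | h
    · nlinarith
    · have ha : 0 < (k:ℝ) - (1-δ)*n := by linarith
      have h2 : 2 * ((k:ℝ) - (1-δ)*n)^2 ≤ ((n:ℝ)-k)^2 := by nlinarith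
      have h3 : s * ((k:ℝ) - (1-δ)*n) ≤ (n:ℝ) - k := by
        have hsq : (s * ((k:ℝ) - (1-δ)*n))^2 ≤ ((n:ℝ) - k)^2 := by
          rw [mul_pow, hs2]; linarith
        have := Real.sqrt_le_sqrt hsq
        rwa [Real.sqrt_sq (by positivity), Real.sqrt_sq hb] at this
      have h4 := mul_le_mul_of_nonneg_left h3 (by linarith : (0:ℝ) ≤ s - 1)
      have e : (s - 1) * (s * ((k:ℝ) - (1-δ)*n)) = (2 - s) * ((k:ℝ) - (1-δ)*n) := by
        linear_combination ((k:ℝ) - (1-δ)*n) * hs2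
      rw [e] at h4
      linarith
  have hCε : 0 ≤ (1 / ((2 - s) * δ) + 1) * ε * n := by positivity
  have goal1 : (k:ℝ) ≤ (1 - (2 - s) * δ + (1 / ((2 - s) * δ) + 1) * ε) * n := by
    have : (1 - (2 - s) * δ + (1 / ((2 - s) * δ) + 1) * ε) * n
        = (1 - (2 - s)*δ) * n + (1 / ((2 - s) * δ) + 1) * ε * n := by ring
    rw [this]; linarith
  have goal2 : ε * ((n:ℝ) - k)^2 ≤ ((n:ℝ) - k)^2 - 2*(ℓ:ℝ)^2 - 2*((m:ℝ)-k)^2 := by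
    nlinarith [hkineq]
  refine ⟨goal1, goal2, ?_⟩
  -- last part
  set D := ((n:ℝ) - k)^2 - 2*(ℓ:ℝ)^2 - 2*((m:ℝ)-k)^2 with hD
  have hD1 : ε * ((n:ℝ) - k)^2 ≤ D := goal2
  have hnk : (2 - s)*δ * n ≤ (n:ℝ) - k := by nlinarith
  have hsq : Real.sqrt ε * ((2 - s)*δ * n) ≤ Real.sqrt D := by
    have h1 : Real.sqrt ε * ((n:ℝ) - k) ≤ Real.sqrt D := by
      rw [show Real.sqrt ε * ((n:ℝ) - k) = Real.sqrt (ε * ((n:ℝ)-k)^2) by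
        rw [Real.sqrt_mul hε.le, Real.sqrt_sq hb]]
      exact Real.sqrt_le_sqrt hD1
    calc Real.sqrt ε * ((2 - s)*δ * n) ≤ Real.sqrt ε * ((n:ℝ) - k) := by
          apply mul_le_mul_of_nonneg_left hnk (Real.sqrt_nonneg _)
      _ ≤ Real.sqrt D := h1
  have hpos : 0 < Real.sqrt ε * ((2 - s)*δ * n) := by
    apply mul_pos (Real.sqrt_pos.2 hε) (by positivity)
  have hDpos : 0 < Real.sqrt D := lt_of_lt_of_le hpos hsq
  rw [div_le_div_iff₀ hDpos (by positivity : (0:ℝ) < Real.sqrt ε * (n:ℝ))]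
  have hC1 : 1 ≤ (1 / ((2 - s) * δ)) * ((2 - s) * δ) := by
    rw [one_div_mul_cancel (ne_of_gt hc0)]
  calc (1:ℝ) * (Real.sqrt ε * n) = Real.sqrt ε * n := by ring
    _ ≤ (1 / ((2 - s) * δ)) * ((2 - s) * δ) * (Real.sqrt ε * n) := by
        nlinarith [mul_pos (Real.sqrt_pos.2 hε) (by linarith : (0:ℝ) < (n:ℝ))]
    _ = (1 / ((2 - s) * δ)) * (Real.sqrt ε * ((2 - s)*δ * n)) := by ring
    _ ≤ (1 / ((2 - s) * δ)) * Real.sqrt D := by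
        apply mul_le_mul_of_nonneg_left hsq (by positivity)
    _ ≤ (1 / ((2 - s) * δ) + 1) * Real.sqrt D := by nlinarith
end

section
/- Let R be a finite simply-connected region, V its vertex set, and V' a connected subset of V containing all boundary vertices of R. Let f and g be partial height functions defined on V' that agree modulo 4 and satisfy f ≤ g pointwise, each admitting at least one extension to a complete height function. Then μ_f is stochastically dominated by μ_g: there exists a probability measure π on pairs (ĥ_f, ĥ_g) of complete height functions, with ĥ_f extending f and ĥ_g extending g, whose first marginal is μ_f, whose second marginal is μ_g, and which assigns probability 1 to the set of pairs with ĥ_f ≤ ĥ_g pointwise on V. -/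
/-- A cell: a lattice unit square, identified by its lower-left corner. -/
abbrev Cell : Type := ℤ × ℤ

/-- A lattice vertex of the square grid. -/
abbrev Vertex : Type := ℤ × ℤ

/-- The four cells having `v` as a corner. -/
def cellsAt (v : Vertex) : Finset Cell :=
  {(v.1 - 1, v.2 - 1), (v.1, v.2 - 1), (v.1 - 1, v.2), (v.1, v.2)}

/-- `v` is a vertex of the region `R` (a corner of one of its cells). -/
def IsVertexOf (R : Finset Cell) (v : Vertex) : Prop := ∃ c ∈ cellsAt v, c ∈ R

/-- `v` is a vertex on the boundary of the region `R`. -/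
def IsBoundaryVertexOf (R : Finset Cell) (v : Vertex) : Prop :=
  IsVertexOf R v ∧ ∃ c ∈ cellsAt v, c ∉ R

/-- Adjacency of lattice vertices. -/
def VAdj (u v : Vertex) : Prop :=
  v = (u.1 + 1, u.2) ∨ v = (u.1 - 1, u.2) ∨ v = (u.1, u.2 + 1) ∨ v = (u.1, u.2 - 1)

/-- The cell lying on the left of the directed edge from `u` to `v`
(for adjacent vertices `u`, `v`). -/
def leftCell (u v : Vertex) : Cell :=
  if v = (u.1 + 1, u.2) then (u.1, u.2)
  else if v = (u.1 - 1, u.2) then (u.1 - 1, u.2 - 1)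
  else if v = (u.1, u.2 + 1) then (u.1 - 1, u.2)
  else (u.1, u.2 - 1)

/-- The cell `c` is black, under the checkerboard coloring selected by the flag `bc`. -/
def IsBlack (bc : Bool) (c : Cell) : Prop := ((c.1 + c.2) % 2 = 0) ↔ bc = true

/-- The edge joining adjacent vertices `u` and `v` lies on the boundary of the region `R`,
i.e. exactly one of the two cells bordering the edge belongs to `R`. -/
def IsBoundaryEdge (R : Finset Cell) (u v : Vertex) : Prop :=
  (leftCell u v ∈ R ∧ leftCell v u ∉ R) ∨ (leftCell u v ∉ R ∧ leftCell v u ∈ R)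

/-- A (partial) height function on the set of vertices `V'` of the region `R`: an
integer-valued function such that for all adjacent vertices `u`, `v` of `V'`, if the edge
`uv` lies on the boundary of `R` then `|h u - h v| = 1`, and if the directed edge from `u`
to `v` has a black square of `R` on its left then `h v - h u ∈ {1, -3}`. -/
def IsPartialHeightFn (bc : Bool) (R : Finset Cell) (V' : Set Vertex) (h : Vertex → ℤ) : Prop :=
  ∀ u v : Vertex, u ∈ V' → v ∈ V' → VAdj u v →
    (IsBoundaryEdge R u v → |h u - h v| = 1) ∧
    (leftCell u v ∈ R → IsBlack bc (leftCell u v) → h v - h u = 1 ∨ h v - h u = -3)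

/-- The set of vertices of the region `R`. -/
def vertexSet (R : Finset Cell) : Set Vertex := {v | IsVertexOf R v}

/-- The set of boundary vertices of the region `R`. -/
def boundaryVertexSet (R : Finset Cell) : Set Vertex := {v | IsBoundaryVertexOf R v}

/-- A complete height function on the region `R` (normalized to vanish off the vertex set
of `R`, so that the collection of complete height functions is finite). -/
def IsCompleteHeightFn (bc : Bool) (R : Finset Cell) (h : Vertex → ℤ) : Prop :=
  IsPartialHeightFn bc R (vertexSet R) h ∧ ∀ v, ¬IsVertexOf R v → h v = 0

/-- The set of complete height functions on `R` extending the partial height function `f`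
defined on `V'`. -/
def Extensions (bc : Bool) (R : Finset Cell) (V' : Set Vertex) (f : Vertex → ℤ) :
    Set (Vertex → ℤ) :=
  {h | IsCompleteHeightFn bc R h ∧ ∀ v ∈ V', h v = f v}

/-- Edge-adjacency of cells (the two unit squares share a side). -/
def CellAdj (a b : Cell) : Prop :=
  (a.1 = b.1 ∧ |a.2 - b.2| = 1) ∨ (a.2 = b.2 ∧ |a.1 - b.1| = 1)

/-- A set of cells is connected under edge-adjacency. -/
def EdgeConnected (S : Set Cell) : Prop :=
  ∀ a ∈ S, ∀ b ∈ S, Relation.ReflTransGen (fun x y => CellAdj x y ∧ y ∈ S) a b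

/-- A finite simply-connected region: nonempty, connected, and with connected complement. -/
def IsSimplyConnectedRegion (R : Finset Cell) : Prop :=
  R.Nonempty ∧ EdgeConnected (R : Set Cell) ∧ EdgeConnected ((R : Set Cell)ᶜ)

/-- A set of vertices is connected as an induced subgraph of the grid. -/
def VConnected (V' : Set Vertex) : Prop :=
  ∀ u ∈ V', ∀ v ∈ V', Relation.ReflTransGen (fun a b => VAdj a b ∧ b ∈ V') u v

/-- The uniform probability mass function on a (finite) set `S` of height functions. -/
noncomputable def uniformOn (S : Set (Vertex → ℤ)) : (Vertex → ℤ) → ℝ :=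
  S.indicator fun _ => ((S.ncard : ℝ))⁻¹

/-- The expected value of `H(v)` when `H` is chosen uniformly at random from the (finite)
set `S` of height functions. -/
noncomputable def heightExp (S : Set (Vertex → ℤ)) (v : Vertex) : ℝ :=
  (∑ᶠ h ∈ S, ((h v : ℤ) : ℝ)) / (S.ncard : ℝ)

/-- The probability of the event `E` when a height function is chosen uniformly at random
from the (finite) set `S`. -/
noncomputable def probOn (S E : Set (Vertex → ℤ)) : ℝ := ((S ∩ E).ncard : ℝ) / (S.ncard : ℝ)

open Finset
open scoped FinsetFamily

lemma exists_coupling {α : Type*} [DistribLattice α] [DecidableEq α] (A B : Finset α)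
    (hA : A.Nonempty) (hB : B.Nonempty)
    (hinf : ∀ a ∈ A, ∀ b ∈ B, a ⊓ b ∈ A) (hsup : ∀ a ∈ A, ∀ b ∈ B, a ⊔ b ∈ B) :
    ∃ π : α × α → ℝ, (∀ q, 0 ≤ π q) ∧
      (Function.support π ⊆ ↑(A ×ˢ B)) ∧
      (∑ q ∈ A ×ˢ B, π q = 1) ∧
      (∀ q, π q ≠ 0 → q.1 ∈ A ∧ q.2 ∈ B ∧ q.1 ≤ q.2) ∧
      (∀ a, ∑ b ∈ B, π (a, b) = if a ∈ A then (A.card : ℝ)⁻¹ else 0) ∧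
      (∀ b, ∑ a ∈ A, π (a, b) = if b ∈ B then (B.card : ℝ)⁻¹ else 0) := by
  classical
  set ι := ↥(A ×ˢ Finset.range B.card) with hι
  set t : ι → Finset (α × ℕ) := fun i => (B.filter (fun b => i.1.1 ≤ b)) ×ˢ Finset.range A.card
    with ht
  have hall : ∀ s : Finset ι, s.card ≤ (s.biUnion t).card := by
    intro s
    set S := s.image (fun i => i.1.1) with hS
    have hSsub : S ⊆ A := by
      intro a ha
      obtain ⟨i, hi, rfl⟩ := Finset.mem_image.1 ha
      exact (Finset.mem_product.1 i.2).1
    set U := B.filter (fun b => ∃ a ∈ S, a ≤ b) with hU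
    have hbi : s.biUnion t = U ×ˢ Finset.range A.card := by
      ext ⟨b, j⟩
      simp only [Finset.mem_biUnion, ht, Finset.mem_product, Finset.mem_filter, hU, hS,
        Finset.mem_image]
      constructor
      · rintro ⟨i, hi, ⟨hb, hib⟩, hj⟩
        exact ⟨⟨hb, ⟨i.1.1, ⟨i, hi, rfl⟩, hib⟩⟩, hj⟩
      · rintro ⟨⟨hb, a, ⟨i, hi, rfl⟩, hab⟩, hj⟩
        exact ⟨i, hi, ⟨hb, hab⟩, hj⟩
    have h1 : s.card ≤ S.card * B.card := by
      have : s.card = (s.image Subtype.val).card :=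
        (Finset.card_image_of_injective _ Subtype.val_injective).symm
      rw [this]
      have hsub : s.image Subtype.val ⊆ S ×ˢ Finset.range B.card := by
        intro p hp
        obtain ⟨i, hi, rfl⟩ := Finset.mem_image.1 hp
        have := Finset.mem_product.1 i.2
        exact Finset.mem_product.2 ⟨Finset.mem_image.2 ⟨i, hi, rfl⟩, this.2⟩
      calc (s.image Subtype.val).card ≤ (S ×ˢ Finset.range B.card).card :=
            Finset.card_le_card hsub
        _ = S.card * B.card := by rw [Finset.card_product, Finset.card_range]
    have h2 : S.card * B.card ≤ A.card * U.card := by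
      calc S.card * B.card ≤ (S ⊼ B).card * (S ⊻ B).card :=
            Finset.le_card_infs_mul_card_sups S B
        _ ≤ A.card * U.card := by
            apply Nat.mul_le_mul <;> apply Finset.card_le_card
            · intro c hc
              obtain ⟨a, ha, b, hb, rfl⟩ := Finset.mem_infs.1 hc
              exact hinf a (hSsub ha) b hb
            · intro c hc
              obtain ⟨a, ha, b, hb, rfl⟩ := Finset.mem_sups.1 hc
              exact Finset.mem_filter.2 ⟨hsup a (hSsub ha) b hb, a, ha, le_sup_left⟩
    rw [hbi, Finset.card_product, Finset.card_range]
    exact h1.trans (h2.trans (Nat.mul_comm _ _).le)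
  obtain ⟨F, hFinj, hFmem⟩ := (Finset.all_card_le_biUnion_card_iff_exists_injective t).1 hall
  have hFB : ∀ i, (F i).1 ∈ B ∧ i.1.1 ≤ (F i).1 ∧ (F i).2 ∈ Finset.range A.card := by
    intro i
    have := Finset.mem_product.1 (hFmem i)
    exact ⟨(Finset.mem_filter.1 this.1).1, (Finset.mem_filter.1 this.1).2, this.2⟩
  have himg : Finset.univ.image F = B ×ˢ Finset.range A.card := by
    apply Finset.eq_of_subset_of_card_le
    · intro p hp
      obtain ⟨i, _, rfl⟩ := Finset.mem_image.1 hp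
      exact Finset.mem_product.2 ⟨(hFB i).1, (hFB i).2.2⟩
    · rw [Finset.card_image_of_injective _ hFinj, Finset.card_univ, Fintype.card_coe,
        Finset.card_product, Finset.card_product, Finset.card_range, Finset.card_range]
      ring_nf
      exact le_rfl
  have hA0 : (A.card : ℝ) ≠ 0 := Nat.cast_ne_zero.2 (Finset.card_ne_zero_of_mem hA.choose_spec)
  have hB0 : (B.card : ℝ) ≠ 0 := Nat.cast_ne_zero.2 (Finset.card_ne_zero_of_mem hB.choose_spec)
  set N : ℝ := (A.card : ℝ) * (B.card : ℝ) with hN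
  have hN0 : N ≠ 0 := mul_ne_zero hA0 hB0
  set π : α × α → ℝ := fun q =>
    ((Finset.univ.filter (fun i : ι => i.1.1 = q.1 ∧ (F i).1 = q.2)).card : ℝ) / N with hπ
  have hpos : ∀ q, 0 ≤ π q := by
    intro q
    apply div_nonneg (Nat.cast_nonneg _)
    positivity
  have hsupp : ∀ q, π q ≠ 0 → q.1 ∈ A ∧ q.2 ∈ B ∧ q.1 ≤ q.2 := by
    intro q hq
    have : (Finset.univ.filter (fun i : ι => i.1.1 = q.1 ∧ (F i).1 = q.2)).Nonempty := by
      rw [Finset.nonempty_iff_ne_empty]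
      intro h
      apply hq
      simp [hπ, h]
    obtain ⟨i, hi⟩ := this
    obtain ⟨h1, h2⟩ := (Finset.mem_filter.1 hi).2
    refine ⟨h1 ▸ (Finset.mem_product.1 i.2).1, h2 ▸ (hFB i).1, ?_⟩
    rw [← h1, ← h2]; exact (hFB i).2.1
  -- count for first marginal
  have hcount1 : ∀ a, ((Finset.univ.filter (fun i : ι => i.1.1 = a)).card : ℕ)
      = if a ∈ A then B.card else 0 := by
    intro a
    have : (Finset.univ.filter (fun i : ι => i.1.1 = a)).card
        = ((A ×ˢ Finset.range B.card).filter (fun p => p.1 = a)).card := by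
      apply Finset.card_bij (fun i _ => i.1)
      · intro i hi
        exact Finset.mem_filter.2 ⟨i.2, (Finset.mem_filter.1 hi).2⟩
      · intro i _ j _ h
        exact Subtype.ext h
      · intro p hp
        exact ⟨⟨p, (Finset.mem_filter.1 hp).1⟩, Finset.mem_filter.2 ⟨Finset.mem_univ _,
          (Finset.mem_filter.1 hp).2⟩, rfl⟩
    rw [this]
    have : (A ×ˢ Finset.range B.card).filter (fun p => p.1 = a)
        = (A.filter (fun x => x = a)) ×ˢ Finset.range B.card := by
      ext p
      simp only [Finset.mem_filter, Finset.mem_product]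
      tauto
    rw [this, Finset.card_product, Finset.card_range, Finset.filter_eq']
    split <;> simp
  have hmarg1 : ∀ a, ∑ b ∈ B, π (a, b) = if a ∈ A then (A.card : ℝ)⁻¹ else 0 := by
    intro a
    have hdisj : Finset.univ.filter (fun i : ι => i.1.1 = a)
        = B.biUnion (fun b => Finset.univ.filter (fun i : ι => i.1.1 = a ∧ (F i).1 = b)) := by
      ext i
      simp only [Finset.mem_filter, Finset.mem_univ, true_and, Finset.mem_biUnion]
      constructor
      · intro h; exact ⟨(F i).1, (hFB i).1, h, rfl⟩
      · rintro ⟨b, _, h, _⟩; exact h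
    have hcard := Finset.card_biUnion (s := B)
      (t := fun b => Finset.univ.filter (fun i : ι => i.1.1 = a ∧ (F i).1 = b)) ?_
    · have : ∑ b ∈ B, π (a, b)
          = ((Finset.univ.filter (fun i : ι => i.1.1 = a)).card : ℝ) / N := by
        rw [hdisj, hcard]
        simp only [hπ]
        rw [Nat.cast_sum, Finset.sum_div]
      rw [this, hcount1 a]
      split
      · rw [hN, mul_comm, ← div_div, div_self hB0, one_div]
      · simp
    · intro x _ y _ hxy
      simp only [Finset.disjoint_left, Finset.mem_filter]
      rintro i ⟨_, _, h2⟩ ⟨_, _, h4⟩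
      exact hxy (h2 ▸ h4 ▸ rfl)
  -- count for second marginal
  have hcount2 : ∀ b, ((Finset.univ.filter (fun i : ι => (F i).1 = b)).card : ℕ)
      = if b ∈ B then A.card else 0 := by
    intro b
    have h1 : (Finset.univ.filter (fun i : ι => (F i).1 = b)).card
        = ((Finset.univ.filter (fun i : ι => (F i).1 = b)).image F).card :=
      (Finset.card_image_of_injective _ hFinj).symm
    have h2 : (Finset.univ.filter (fun i : ι => (F i).1 = b)).image F
        = (B ×ˢ Finset.range A.card).filter (fun p => p.1 = b) := by
      rw [← himg]
      ext p
      simp only [Finset.mem_image, Finset.mem_filter, Finset.mem_univ, true_and]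
      constructor
      · rintro ⟨i, hi, rfl⟩; exact ⟨⟨i, rfl⟩, hi⟩
      · rintro ⟨⟨i, rfl⟩, hp⟩; exact ⟨i, hp, rfl⟩
    have h3 : (B ×ˢ Finset.range A.card).filter (fun p => p.1 = b)
        = (B.filter (fun x => x = b)) ×ˢ Finset.range A.card := by
      ext p
      simp only [Finset.mem_filter, Finset.mem_product]
      tauto
    rw [h1, h2, h3, Finset.card_product, Finset.card_range, Finset.filter_eq']
    split <;> simp
  have hmarg2 : ∀ b, ∑ a ∈ A, π (a, b) = if b ∈ B then (B.card : ℝ)⁻¹ else 0 := by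
    intro b
    have hdisj : Finset.univ.filter (fun i : ι => (F i).1 = b)
        = A.biUnion (fun a => Finset.univ.filter (fun i : ι => i.1.1 = a ∧ (F i).1 = b)) := by
      ext i
      simp only [Finset.mem_filter, Finset.mem_univ, true_and, Finset.mem_biUnion]
      constructor
      · intro h; exact ⟨i.1.1, (Finset.mem_product.1 i.2).1, rfl, h⟩
      · rintro ⟨a, _, _, h⟩; exact h
    have hcard := Finset.card_biUnion (s := A)
      (t := fun a => Finset.univ.filter (fun i : ι => i.1.1 = a ∧ (F i).1 = b)) ?_
    · have heq : ∑ a ∈ A, π (a, b)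
          = ((Finset.univ.filter (fun i : ι => (F i).1 = b)).card : ℝ) / N := by
        rw [hdisj, hcard]
        simp only [hπ]
        rw [Nat.cast_sum, Finset.sum_div]
      rw [heq, hcount2 b]
      split
      · rw [hN, ← div_div, div_self hA0, one_div]
      · simp
    · intro x _ y _ hxy
      simp only [Finset.disjoint_left, Finset.mem_filter]
      rintro i ⟨_, h2, _⟩ ⟨_, h4, _⟩
      exact hxy (h2 ▸ h4 ▸ rfl)
  have htot : ∑ q ∈ A ×ˢ B, π q = 1 := by
    rw [Finset.sum_product]
    have hc : ∀ a ∈ A, ∑ b ∈ B, π (a, b) = (A.card : ℝ)⁻¹ := by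
      intro a ha
      rw [hmarg1 a, if_pos ha]
    rw [Finset.sum_congr rfl hc, Finset.sum_const, nsmul_eq_mul, mul_inv_cancel₀ hA0]
  have hsuppsub : Function.support π ⊆ ↑(A ×ˢ B) := by
    intro q hq
    obtain ⟨h1, h2, _⟩ := hsupp q hq
    exact Finset.mem_coe.2 (Finset.mem_product.2 ⟨h1, h2⟩)
  exact ⟨π, hpos, hsuppsub, htot, hsupp, hmarg1, hmarg2⟩
-- =========== auxiliary lemmas ===========

lemma lcE (x y : ℤ) : leftCell (x,y) (x+1,y) = (x,y) := by
  simp [leftCell]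

lemma lcE' (x y : ℤ) : leftCell (x+1,y) (x,y) = (x,y-1) := by
  have h1 : ¬(((x,y) : Vertex) = (x+1+1, y)) := by simp; omega
  have h2 : ((x,y) : Vertex) = (x+1-1, y) := by norm_num
  rw [leftCell, if_neg h1, if_pos h2]
  norm_num

lemma lcN (x y : ℤ) : leftCell (x,y) (x,y+1) = (x-1,y) := by
  have h1 : ¬(((x,y+1) : Vertex) = (x+1, y)) := by simp
  have h2 : ¬(((x,y+1) : Vertex) = (x-1, y)) := by simp
  have h3 : ((x,y+1) : Vertex) = (x, y+1) := rfl
  rw [leftCell, if_neg h1, if_neg h2, if_pos h3]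

lemma lcN' (x y : ℤ) : leftCell (x,y+1) (x,y) = (x,y) := by
  have h1 : ¬(((x,y) : Vertex) = (x+1, y+1)) := by simp
  have h2 : ¬(((x,y) : Vertex) = (x-1, y+1)) := by simp
  have h3 : ¬(((x,y) : Vertex) = (x, y+1+1)) := by simp; omega
  rw [leftCell, if_neg h1, if_neg h2, if_neg h3]
  norm_num

lemma vadj_symm {u v : Vertex} (h : VAdj u v) : VAdj v u := by
  obtain ⟨x, y⟩ := u
  rcases h with h | h | h | h <;> subst h <;> unfold VAdj <;> simp

/-- The relation of moving along an edge of the grid that borders a cell of `R`,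
staying inside the vertex set. -/
def EdgeRel (R : Finset Cell) (a b : Vertex) : Prop :=
  VAdj a b ∧ b ∈ vertexSet R ∧ (leftCell a b ∈ R ∨ leftCell b a ∈ R)

def Reach (R : Finset Cell) : Vertex → Vertex → Prop := Relation.ReflTransGen (EdgeRel R)

lemma mem_cellsAt_iff (v : Vertex) (c : Cell) :
    c ∈ cellsAt v ↔ (v = (c.1, c.2) ∨ v = (c.1+1, c.2) ∨ v = (c.1, c.2+1) ∨ v = (c.1+1, c.2+1)) := by
  obtain ⟨x, y⟩ := v
  obtain ⟨a, b⟩ := c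
  simp [cellsAt, Prod.ext_iff]
  omega

/-- both cells adjacent to an edge are corners cells of each endpoint -/
lemma edge_cells {u v : Vertex} (h : VAdj u v) :
    leftCell u v ∈ cellsAt u ∧ leftCell v u ∈ cellsAt u ∧
    leftCell u v ∈ cellsAt v ∧ leftCell v u ∈ cellsAt v := by
  obtain ⟨x, y⟩ := u
  rcases h with h | h | h | h <;> subst h
  · rw [lcE, show ((x+1,y) : Vertex) = (x+1, y) from rfl]
    have := lcE' x y
    rw [show leftCell ((x:ℤ)+1,y) (x,y) = (x, y-1) from lcE' x y]
    refine ⟨?_, ?_, ?_, ?_⟩ <;> · rw [mem_cellsAt_iff]; simp; try omega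
  · have e1 : ((x,y) : Vertex) = ((x-1)+1, y) := by norm_num
    rw [show leftCell ((x:ℤ),y) (x-1,y) = (x-1,y-1) from by rw [e1]; exact lcE' (x-1) y]
    rw [show leftCell ((x:ℤ)-1,y) (x,y) = (x-1,y) from by rw [e1]; exact lcE (x-1) y]
    refine ⟨?_, ?_, ?_, ?_⟩ <;> · rw [mem_cellsAt_iff]; simp; try omega
  · rw [lcN, show leftCell ((x:ℤ),y+1) (x,y) = (x,y) from lcN' x y]
    refine ⟨?_, ?_, ?_, ?_⟩ <;> · rw [mem_cellsAt_iff]; simp; try omega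
  · have e1 : ((x,y) : Vertex) = (x, (y-1)+1) := by norm_num
    rw [show leftCell ((x:ℤ),y) (x,y-1) = (x,y-1) from by rw (occs := .pos [1]) [e1]; exact lcN' x (y-1)]
    rw [show leftCell ((x:ℤ),y-1) (x,y) = (x-1,y-1) from by rw [e1]; exact lcN x (y-1)]
    refine ⟨?_, ?_, ?_, ?_⟩ <;> · rw [mem_cellsAt_iff]; simp; try omega

/-- the two cells adjacent to an edge have opposite colors -/
lemma edge_parity {u v : Vertex} (h : VAdj u v) :
    ((leftCell u v).1 + (leftCell u v).2 + ((leftCell v u).1 + (leftCell v u).2)) % 2 = 1 := by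
  obtain ⟨x, y⟩ := u
  rcases h with h | h | h | h <;> subst h
  · rw [lcE, show leftCell ((x:ℤ)+1,y) (x,y) = (x, y-1) from lcE' x y]; simp; omega
  · have e1 : ((x,y) : Vertex) = ((x-1)+1, y) := by norm_num
    rw [show leftCell ((x:ℤ),y) (x-1,y) = (x-1,y-1) from by rw [e1]; exact lcE' (x-1) y]
    rw [show leftCell ((x:ℤ)-1,y) (x,y) = (x-1,y) from by rw [e1]; exact lcE (x-1) y]
    simp; omega
  · rw [lcN, show leftCell ((x:ℤ),y+1) (x,y) = (x,y) from lcN' x y]; simp; omega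
  · have e1 : ((x,y) : Vertex) = (x, (y-1)+1) := by norm_num
    rw [show leftCell ((x:ℤ),y) (x,y-1) = (x,y-1) from by rw (occs := .pos [1]) [e1]; exact lcN' x (y-1)]
    rw [show leftCell ((x:ℤ),y-1) (x,y) = (x-1,y-1) from by rw [e1]; exact lcN x (y-1)]
    simp; omega

lemma black_xor {bc : Bool} {u v : Vertex} (h : VAdj u v) :
    IsBlack bc (leftCell u v) ↔ ¬ IsBlack bc (leftCell v u) := by
  have := edge_parity h
  unfold IsBlack
  cases bc <;> simp <;> omega

lemma vadjE (x y : ℤ) : VAdj (x,y) (x+1,y) := Or.inl rfl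
lemma vadjN (x y : ℤ) : VAdj (x,y) (x,y+1) := Or.inr (Or.inr (Or.inl rfl))

lemma cell_reach {R : Finset Cell} {c : Cell} (hc : c ∈ R) {u v : Vertex}
    (hu : c ∈ cellsAt u) (hv : c ∈ cellsAt v) : Reach R u v := by
  obtain ⟨a, b⟩ := c
  have m00 : ((a,b) : Vertex) ∈ vertexSet R := ⟨(a,b), (mem_cellsAt_iff _ _).2 (Or.inl rfl), hc⟩
  have m10 : ((a+1,b) : Vertex) ∈ vertexSet R :=
    ⟨(a,b), (mem_cellsAt_iff _ _).2 (Or.inr (Or.inl rfl)), hc⟩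
  have m01 : ((a,b+1) : Vertex) ∈ vertexSet R :=
    ⟨(a,b), (mem_cellsAt_iff _ _).2 (Or.inr (Or.inr (Or.inl rfl))), hc⟩
  have m11 : ((a+1,b+1) : Vertex) ∈ vertexSet R :=
    ⟨(a,b), (mem_cellsAt_iff _ _).2 (Or.inr (Or.inr (Or.inr rfl))), hc⟩
  have s1 : EdgeRel R (a,b) (a+1,b) := ⟨vadjE a b, m10, Or.inl (by rw [lcE]; exact hc)⟩
  have s1' : EdgeRel R (a+1,b) (a,b) :=
    ⟨vadj_symm (vadjE a b), m00, Or.inr (by rw [lcE]; exact hc)⟩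
  have s2 : EdgeRel R (a,b) (a,b+1) := ⟨vadjN a b, m01, Or.inr (by rw [lcN']; exact hc)⟩
  have s2' : EdgeRel R (a,b+1) (a,b) :=
    ⟨vadj_symm (vadjN a b), m00, Or.inl (by rw [lcN']; exact hc)⟩
  have s3 : EdgeRel R (a+1,b) (a+1,b+1) :=
    ⟨vadjN (a+1) b, m11, Or.inl (by rw [lcN]; simpa using hc)⟩
  have s3' : EdgeRel R (a+1,b+1) (a+1,b) :=
    ⟨vadj_symm (vadjN (a+1) b), m10, Or.inr (by rw [lcN]; simpa using hc)⟩
  have s4 : EdgeRel R (a,b+1) (a+1,b+1) :=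
    ⟨vadjE a (b+1), m11, Or.inr (by rw [lcE']; simpa using hc)⟩
  have s4' : EdgeRel R (a+1,b+1) (a,b+1) :=
    ⟨vadj_symm (vadjE a (b+1)), m01, Or.inl (by rw [lcE']; simpa using hc)⟩
  have hu0 : Reach R u (a,b) := by
    rcases (mem_cellsAt_iff u (a,b)).1 hu with h | h | h | h <;> subst h
    · exact Relation.ReflTransGen.refl
    · exact Relation.ReflTransGen.single s1'
    · exact Relation.ReflTransGen.single s2'
    · exact Relation.ReflTransGen.head s3' (Relation.ReflTransGen.single s1')
  have hv0 : Reach R (a,b) v := by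
    rcases (mem_cellsAt_iff v (a,b)).1 hv with h | h | h | h <;> subst h
    · exact Relation.ReflTransGen.refl
    · exact Relation.ReflTransGen.single s1
    · exact Relation.ReflTransGen.single s2
    · exact Relation.ReflTransGen.head s1 (Relation.ReflTransGen.single s3)
  exact hu0.trans hv0

lemma cellAdj_shared {a b : Cell} (h : CellAdj a b) : ∃ w, a ∈ cellsAt w ∧ b ∈ cellsAt w := by
  refine ⟨(max a.1 b.1, max a.2 b.2), ?_, ?_⟩ <;> rw [mem_cellsAt_iff] <;>
    rcases h with ⟨h1, h2⟩ | ⟨h1, h2⟩ <;>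
    rcases (abs_eq (by norm_num : (0:ℤ) ≤ 1)).1 h2 with h3 | h3 <;>
    simp [Prod.ext_iff] <;> omega

lemma mem_of_cellpath {R : Finset Cell} {a b : Cell}
    (h : Relation.ReflTransGen (fun x y => CellAdj x y ∧ y ∈ (R : Set Cell)) a b)
    (ha : a ∈ R) : b ∈ R := by
  induction h with
  | refl => exact ha
  | tail _ step _ => exact step.2

lemma vertex_reach {R : Finset Cell} (hR : IsSimplyConnectedRegion R) {u v : Vertex}
    (hu : u ∈ vertexSet R) (hv : v ∈ vertexSet R) : Reach R u v := by
  obtain ⟨cu, hcu, hcuR⟩ := hu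
  obtain ⟨cv, hcv, hcvR⟩ := hv
  have hpath : Relation.ReflTransGen (fun x y => CellAdj x y ∧ y ∈ (R : Set Cell)) cu cv :=
    hR.2.1 cu hcuR cv hcvR
  suffices H : ∀ c, Relation.ReflTransGen (fun x y => CellAdj x y ∧ y ∈ (R : Set Cell)) cu c →
      ∀ w, c ∈ cellsAt w → Reach R u w from H cv hpath v hcv
  intro c hc
  induction hc with
  | refl => exact fun w hw => cell_reach hcuR hcu hw
  | @tail p q hp step ih =>
      intro w hw
      obtain ⟨w0, hw0a, hw0b⟩ := cellAdj_shared step.1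
      exact (ih w0 hw0a).trans (cell_reach step.2 hw0b hw)

lemma exists_boundary_vertex {R : Finset Cell} (hR : R.Nonempty) :
    ∃ v, v ∈ boundaryVertexSet R := by
  obtain ⟨c, hc, hmax⟩ := R.exists_max_image Prod.fst hR
  refine ⟨(c.1+1, c.2+1), ⟨⟨c, ?_, hc⟩, ⟨(c.1+1, c.2), ?_, ?_⟩⟩⟩
  · exact (mem_cellsAt_iff _ _).2 (Or.inr (Or.inr (Or.inr rfl)))
  · exact (mem_cellsAt_iff _ _).2 (Or.inr (Or.inr (Or.inl rfl)))
  · intro hmem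
    have := hmax _ hmem
    simp at this

lemma step_bound_aux {bc : Bool} {R : Finset Cell} {h : Vertex → ℤ}
    (hh : IsPartialHeightFn bc R (vertexSet R) h) {u v : Vertex}
    (hu : u ∈ vertexSet R) (hv : v ∈ vertexSet R) (hadj : VAdj u v)
    (hL : leftCell u v ∈ R) : |h u - h v| ≤ 3 := by
  by_cases hb : IsBlack bc (leftCell u v)
  · have := (hh u v hu hv hadj).2 hL hb
    rw [abs_le]; omega
  · have hb' : IsBlack bc (leftCell v u) := by
      by_contra h'
      exact hb ((black_xor hadj).2 h')
    by_cases hR' : leftCell v u ∈ R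
    · have := (hh v u hv hu (vadj_symm hadj)).2 hR' hb'
      rw [abs_le]; omega
    · have h1 := (hh u v hu hv hadj).1 (Or.inl ⟨hL, hR'⟩)
      rw [abs_eq (by norm_num : (0:ℤ) ≤ 1)] at h1
      rw [abs_le]; omega

lemma step_bound {bc : Bool} {R : Finset Cell} {h : Vertex → ℤ}
    (hh : IsPartialHeightFn bc R (vertexSet R) h) {u v : Vertex}
    (hu : u ∈ vertexSet R) (hv : v ∈ vertexSet R) (hadj : VAdj u v)
    (hor : leftCell u v ∈ R ∨ leftCell v u ∈ R) : |h u - h v| ≤ 3 := by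
  rcases hor with hL | hL
  · exact step_bound_aux hh hu hv hadj hL
  · rw [abs_sub_comm]
    exact step_bound_aux hh hv hu (vadj_symm hadj) hL

lemma mod4_step {bc : Bool} {R : Finset Cell} {h1 h2 : Vertex → ℤ}
    (hh1 : IsPartialHeightFn bc R (vertexSet R) h1)
    (hh2 : IsPartialHeightFn bc R (vertexSet R) h2) {u v : Vertex}
    (hu : u ∈ vertexSet R) (hv : v ∈ vertexSet R) (hadj : VAdj u v)
    (hL : leftCell u v ∈ R) (hL' : leftCell v u ∈ R)
    (hcong : h1 v % 4 = h2 v % 4) : h1 u % 4 = h2 u % 4 := by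
  by_cases hb : IsBlack bc (leftCell u v)
  · have a1 := (hh1 u v hu hv hadj).2 hL hb
    have a2 := (hh2 u v hu hv hadj).2 hL hb
    omega
  · have hb' : IsBlack bc (leftCell v u) := by
      by_contra h'
      exact hb ((black_xor hadj).2 h')
    have a1 := (hh1 v u hv hu (vadj_symm hadj)).2 hL' hb'
    have a2 := (hh2 v u hv hu (vadj_symm hadj)).2 hL' hb'
    omega

lemma interior_cells {R : Finset Cell} {v : Vertex} (hv : v ∈ vertexSet R)
    (hnb : v ∉ boundaryVertexSet R) : ∀ c ∈ cellsAt v, c ∈ R := by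
  intro c hc
  by_contra hcR
  exact hnb ⟨hv, c, hc, hcR⟩

lemma mod4_global {bc : Bool} {R : Finset Cell} {V' : Set Vertex} {f g h1 h2 : Vertex → ℤ}
    (hR : IsSimplyConnectedRegion R) (hV'bd : boundaryVertexSet R ⊆ V')
    (hmod : ∀ v ∈ V', f v % 4 = g v % 4)
    (h1e : h1 ∈ Extensions bc R V' f) (h2e : h2 ∈ Extensions bc R V' g) :
    ∀ v ∈ vertexSet R, h1 v % 4 = h2 v % 4 := by
  intro v hv
  obtain ⟨v0, hv0b⟩ := exists_boundary_vertex hR.1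
  have hv0V : v0 ∈ V' := hV'bd hv0b
  have hv0vs : v0 ∈ vertexSet R := hv0b.1
  have key : ∀ w ∈ V', h1 w % 4 = h2 w % 4 := fun w hw => by
    rw [h1e.2 w hw, h2e.2 w hw]; exact hmod w hw
  have hreach : Reach R v v0 := vertex_reach hR hv hv0vs
  refine Relation.ReflTransGen.head_induction_on
    (motive := fun a (_ : Relation.ReflTransGen (EdgeRel R) a v0) =>
      a ∈ vertexSet R → h1 a % 4 = h2 a % 4) hreach (fun _ => key v0 hv0V) ?_ hv
  intro a c step _ ih ha
  by_cases haV : a ∈ V'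
  · exact key a haV
  · have hint : ∀ cc ∈ cellsAt a, cc ∈ R :=
      interior_cells ha (fun hb => haV (hV'bd hb))
    have hL : leftCell a c ∈ R := hint _ (edge_cells step.1).1
    have hL' : leftCell c a ∈ R := hint _ (edge_cells step.1).2.1
    exact mod4_step h1e.1.1 h2e.1.1 ha step.2.1 step.1 hL hL' (ih step.2.1)

lemma exists_bound {bc : Bool} {R : Finset Cell} {V' : Set Vertex} {f : Vertex → ℤ}
    (hR : IsSimplyConnectedRegion R) (hV'bd : boundaryVertexSet R ⊆ V') (v : Vertex) :
    ∃ n : ℤ, ∀ h ∈ Extensions bc R V' f, |h v| ≤ n := by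
  by_cases hv : v ∈ vertexSet R
  · obtain ⟨v0, hv0b⟩ := exists_boundary_vertex hR.1
    have hv0V : v0 ∈ V' := hV'bd hv0b
    have hreach : Reach R v v0 := vertex_reach hR hv hv0b.1
    refine Relation.ReflTransGen.head_induction_on
      (motive := fun a (_ : Relation.ReflTransGen (EdgeRel R) a v0) =>
        a ∈ vertexSet R → ∃ n : ℤ, ∀ h ∈ Extensions bc R V' f, |h a| ≤ n)
      hreach ?_ ?_ hv
    · exact fun _ => ⟨|f v0|, fun h hh => by rw [hh.2 v0 hv0V]⟩
    · intro a c step _ ih ha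
      obtain ⟨n, hn⟩ := ih step.2.1
      refine ⟨n + 3, fun h hh => ?_⟩
      have e1 : |h a - h c| ≤ 3 := step_bound hh.1.1 ha step.2.1 step.1 step.2.2
      have e2 := hn h hh
      rw [abs_le] at e1 e2 ⊢
      omega
  · exact ⟨0, fun h hh => by rw [hh.1.2 v hv]; simp⟩

lemma vertexSet_finite (R : Finset Cell) : (vertexSet R).Finite := by
  have hsub : vertexSet R ⊆
      ⋃ c ∈ (R : Set Cell), {(c.1,c.2),(c.1+1,c.2),(c.1,c.2+1),(c.1+1,c.2+1)} := by
    rintro v ⟨c, hc, hcR⟩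
    refine Set.mem_biUnion hcR ?_
    rcases (mem_cellsAt_iff v c).1 hc with h | h | h | h <;> simp [h]
  refine Set.Finite.subset ?_ hsub
  refine Set.Finite.biUnion R.finite_toSet (fun c _ => ?_)
  exact (((Set.finite_singleton _).insert _).insert _).insert _

lemma ext_finite {bc : Bool} {R : Finset Cell} {V' : Set Vertex} {f : Vertex → ℤ}
    (hR : IsSimplyConnectedRegion R) (hV'bd : boundaryVertexSet R ⊆ V') :
    (Extensions bc R V' f).Finite := by
  classical
  choose n hn using (fun v => exists_bound (bc := bc) (V' := V') (f := f) hR hV'bd v)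
  have hVSfin := vertexSet_finite R
  set S : Vertex → Set ℤ := fun v => if v ∈ vertexSet R then Set.Icc (-(n v)) (n v) else {0}
    with hS
  have hsub : Extensions bc R V' f ⊆ {h | ∀ v, h v ∈ S v} := by
    intro h hh v
    by_cases hv : v ∈ vertexSet R
    · simp only [hS, if_pos hv, Set.mem_Icc]
      have := hn v h hh
      rw [abs_le] at this
      exact this
    · simp only [hS, if_neg hv, Set.mem_singleton_iff]
      exact hh.1.2 v hv
  refine Set.Finite.subset ?_ hsub
  have hSfin : ∀ v, (S v).Finite := fun v => by
    rw [hS]; dsimp only; split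
    exacts [Set.finite_Icc _ _, Set.finite_singleton _]
  have hinj : Set.InjOn (fun (h : Vertex → ℤ) (v : ↥(vertexSet R)) => h v)
      {h | ∀ v, h v ∈ S v} := by
    intro h1 m1 h2 m2 he
    funext v
    by_cases hv : v ∈ vertexSet R
    · exact congrFun he ⟨v, hv⟩
    · have e1 := m1 v
      have e2 := m2 v
      simp only [hS, if_neg hv, Set.mem_singleton_iff] at e1 e2
      rw [e1, e2]
  refine Set.Finite.of_finite_image ?_ hinj
  have himg : (fun (h : Vertex → ℤ) (v : ↥(vertexSet R)) => h v) '' {h | ∀ v, h v ∈ S v} ⊆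
      Set.pi Set.univ (fun v : ↥(vertexSet R) => S v) := by
    rintro g ⟨h, hh, rfl⟩ v _
    exact hh v
  refine Set.Finite.subset ?_ himg
  haveI := hVSfin.to_subtype
  exact Set.Finite.pi (fun v => hSfin v)

lemma inf_sup_mem {bc : Bool} {R : Finset Cell} {V' : Set Vertex} {f g h1 h2 : Vertex → ℤ}
    (hR : IsSimplyConnectedRegion R) (hV'bd : boundaryVertexSet R ⊆ V')
    (hmod : ∀ v ∈ V', f v % 4 = g v % 4) (hle : ∀ v ∈ V', f v ≤ g v)
    (h1e : h1 ∈ Extensions bc R V' f) (h2e : h2 ∈ Extensions bc R V' g) :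
    (h1 ⊓ h2) ∈ Extensions bc R V' f ∧ (h1 ⊔ h2) ∈ Extensions bc R V' g := by
  have hm4 := mod4_global hR hV'bd hmod h1e h2e
  have key : ∀ u v : Vertex, u ∈ vertexSet R → v ∈ vertexSet R → VAdj u v →
      ((IsBoundaryEdge R u v → |(h1 ⊓ h2) u - (h1 ⊓ h2) v| = 1) ∧
        (leftCell u v ∈ R → IsBlack bc (leftCell u v) →
          (h1 ⊓ h2) v - (h1 ⊓ h2) u = 1 ∨ (h1 ⊓ h2) v - (h1 ⊓ h2) u = -3)) ∧
      ((IsBoundaryEdge R u v → |(h1 ⊔ h2) u - (h1 ⊔ h2) v| = 1) ∧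
        (leftCell u v ∈ R → IsBlack bc (leftCell u v) →
          (h1 ⊔ h2) v - (h1 ⊔ h2) u = 1 ∨ (h1 ⊔ h2) v - (h1 ⊔ h2) u = -3)) := by
    intro u v hu hv hadj
    have c1 := h1e.1.1 u v hu hv hadj
    have c2 := h2e.1.1 u v hu hv hadj
    have m4u := hm4 u hu
    have m4v := hm4 v hv
    simp only [Pi.inf_apply, Pi.sup_apply]
    rcases le_total (h1 u) (h2 u) with h' | h' <;> rcases le_total (h1 v) (h2 v) with h'' | h''
    · rw [inf_eq_left.2 h', inf_eq_left.2 h'', sup_eq_right.2 h', sup_eq_right.2 h'']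
      exact ⟨c1, c2⟩
    · rw [inf_eq_left.2 h', inf_eq_right.2 h'', sup_eq_right.2 h', sup_eq_left.2 h'']
      refine ⟨⟨?_, ?_⟩, ?_, ?_⟩
      · intro hbe
        have e1 := (abs_eq (by norm_num : (0:ℤ) ≤ 1)).1 (c1.1 hbe)
        have e2 := (abs_eq (by norm_num : (0:ℤ) ≤ 1)).1 (c2.1 hbe)
        rw [abs_eq (by norm_num : (0:ℤ) ≤ 1)]
        omega
      · intro hLR hblack
        have e1 := c1.2 hLR hblack
        have e2 := c2.2 hLR hblack
        omega
      · intro hbe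
        have e1 := (abs_eq (by norm_num : (0:ℤ) ≤ 1)).1 (c1.1 hbe)
        have e2 := (abs_eq (by norm_num : (0:ℤ) ≤ 1)).1 (c2.1 hbe)
        rw [abs_eq (by norm_num : (0:ℤ) ≤ 1)]
        omega
      · intro hLR hblack
        have e1 := c1.2 hLR hblack
        have e2 := c2.2 hLR hblack
        omega
    · rw [inf_eq_right.2 h', inf_eq_left.2 h'', sup_eq_left.2 h', sup_eq_right.2 h'']
      refine ⟨⟨?_, ?_⟩, ?_, ?_⟩
      · intro hbe
        have e1 := (abs_eq (by norm_num : (0:ℤ) ≤ 1)).1 (c1.1 hbe)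
        have e2 := (abs_eq (by norm_num : (0:ℤ) ≤ 1)).1 (c2.1 hbe)
        rw [abs_eq (by norm_num : (0:ℤ) ≤ 1)]
        omega
      · intro hLR hblack
        have e1 := c1.2 hLR hblack
        have e2 := c2.2 hLR hblack
        omega
      · intro hbe
        have e1 := (abs_eq (by norm_num : (0:ℤ) ≤ 1)).1 (c1.1 hbe)
        have e2 := (abs_eq (by norm_num : (0:ℤ) ≤ 1)).1 (c2.1 hbe)
        rw [abs_eq (by norm_num : (0:ℤ) ≤ 1)]
        omega
      · intro hLR hblack
        have e1 := c1.2 hLR hblack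
        have e2 := c2.2 hLR hblack
        omega
    · rw [inf_eq_right.2 h', inf_eq_right.2 h'', sup_eq_left.2 h', sup_eq_left.2 h'']
      exact ⟨c2, c1⟩
  constructor
  · refine ⟨⟨fun u v hu hv hadj => (key u v hu hv hadj).1, fun v hv => ?_⟩, fun v hv => ?_⟩
    · rw [Pi.inf_apply, h1e.1.2 v hv, h2e.1.2 v hv]; simp
    · rw [Pi.inf_apply, h1e.2 v hv, h2e.2 v hv]; exact inf_eq_left.2 (hle v hv)
  · refine ⟨⟨fun u v hu hv hadj => (key u v hu hv hadj).2, fun v hv => ?_⟩, fun v hv => ?_⟩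
    · rw [Pi.sup_apply, h1e.1.2 v hv, h2e.1.2 v hv]; simp
    · rw [Pi.sup_apply, h1e.2 v hv, h2e.2 v hv]; exact sup_eq_right.2 (hle v hv)

/-- Lemma 17 (monotonicity): stochastic domination of the uniform measures on extensions. -/
theorem statement10 (bc : Bool) (R : Finset Cell) (hR : IsSimplyConnectedRegion R)
    (V' : Set Vertex) (hV'sub : V' ⊆ vertexSet R) (hV'conn : VConnected V')
    (hV'bd : boundaryVertexSet R ⊆ V')
    (f g : Vertex → ℤ)
    (hf : IsPartialHeightFn bc R V' f) (hg : IsPartialHeightFn bc R V' g)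
    (hmod : ∀ v ∈ V', f v % 4 = g v % 4)
    (hle : ∀ v ∈ V', f v ≤ g v)
    (hfext : (Extensions bc R V' f).Nonempty) (hgext : (Extensions bc R V' g).Nonempty) :
    ∃ π : (Vertex → ℤ) × (Vertex → ℤ) → ℝ,
      (∀ q, 0 ≤ π q) ∧ (∑ᶠ q, π q = 1) ∧
      (∀ q, π q ≠ 0 → q.1 ∈ Extensions bc R V' f ∧ q.2 ∈ Extensions bc R V' g ∧
        ∀ v ∈ vertexSet R, q.1 v ≤ q.2 v) ∧
      (∀ h₁, ∑ᶠ h₂, π (h₁, h₂) = uniformOn (Extensions bc R V' f) h₁) ∧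
      (∀ h₂, ∑ᶠ h₁, π (h₁, h₂) = uniformOn (Extensions bc R V' g) h₂) := by
  classical
  have hAfin : (Extensions bc R V' f).Finite := ext_finite hR hV'bd
  have hBfin : (Extensions bc R V' g).Finite := ext_finite hR hV'bd
  set A := hAfin.toFinset with hA
  set B := hBfin.toFinset with hB
  have hAmem : ∀ x, x ∈ A ↔ x ∈ Extensions bc R V' f := fun x => hAfin.mem_toFinset
  have hBmem : ∀ x, x ∈ B ↔ x ∈ Extensions bc R V' g := fun x => hBfin.mem_toFinset
  have hAne : A.Nonempty := by rw [hA, Set.Finite.toFinset_nonempty]; exact hfext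
  have hBne : B.Nonempty := by rw [hB, Set.Finite.toFinset_nonempty]; exact hgext
  have hinf : ∀ a ∈ A, ∀ b ∈ B, a ⊓ b ∈ A := fun a ha b hb =>
    (hAmem _).2 (inf_sup_mem hR hV'bd hmod hle ((hAmem a).1 ha) ((hBmem b).1 hb)).1
  have hsup : ∀ a ∈ A, ∀ b ∈ B, a ⊔ b ∈ B := fun a ha b hb =>
    (hBmem _).2 (inf_sup_mem hR hV'bd hmod hle ((hAmem a).1 ha) ((hBmem b).1 hb)).2
  obtain ⟨π, hpos, hsuppsub, htot, hsupp, hmarg1, hmarg2⟩ :=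
    exists_coupling A B hAne hBne hinf hsup
  have hcardA : ((Extensions bc R V' f).ncard : ℝ) = (A.card : ℝ) := by
    rw [Set.ncard_eq_toFinset_card _ hAfin]
  have hcardB : ((Extensions bc R V' g).ncard : ℝ) = (B.card : ℝ) := by
    rw [Set.ncard_eq_toFinset_card _ hBfin]
  refine ⟨π, hpos, ?_, ?_, ?_, ?_⟩
  · rw [finsum_eq_sum_of_support_subset π hsuppsub]; exact htot
  · intro q hq
    obtain ⟨h1A, h2B, hle'⟩ := hsupp q hq
    exact ⟨(hAmem _).1 h1A, (hBmem _).1 h2B, fun v _ => (Pi.le_def.1 hle') v⟩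
  · intro h₁
    have hs : Function.support (fun h₂ => π (h₁, h₂)) ⊆ ↑B := by
      intro h₂ hh
      exact Finset.mem_coe.2 (hsupp (h₁, h₂) hh).2.1
    rw [finsum_eq_sum_of_support_subset _ hs, hmarg1 h₁]
    unfold uniformOn
    by_cases hm : h₁ ∈ Extensions bc R V' f
    · rw [Set.indicator_of_mem hm, if_pos ((hAmem _).2 hm), hcardA]
    · rw [Set.indicator_of_notMem hm, if_neg (fun c => hm ((hAmem _).1 c))]
  · intro h₂
    have hs : Function.support (fun h₁ => π (h₁, h₂)) ⊆ ↑A := by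
      intro h₁ hh
      exact Finset.mem_coe.2 (hsupp (h₁, h₂) hh).1
    rw [finsum_eq_sum_of_support_subset _ hs, hmarg2 h₂]
    unfold uniformOn
    by_cases hm : h₂ ∈ Extensions bc R V' g
    · rw [Set.indicator_of_mem hm, if_pos ((hBmem _).2 hm), hcardB]
    · rw [Set.indicator_of_notMem hm, if_neg (fun c => hm ((hBmem _).1 c))]
end
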